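/- arXiv:math/0206246 — 2 statements merged into one kernel-verified Lean document; each statement's English description precedes it below -/
import Mathlib

section
/- Standardization commutes with binary search tree insertion on Q-symbols: for any word w, the tree Q(w) := T(std(w)^{-1}) records the insertion order, and the labelled tree P(w) is obtained from Q(w) by replacing each label i by the i-th letter of w (in position order). -/
namespace Sylv

variable {α : Type*}

/-- Insert a letter into a binary search tree: left on `≤`, right on `>`. -/
def insert [LinearOrder α] (x : α) : Tree α → Tree α
  | BinaryTree.nil => BinaryTree.node x BinaryTree.nil BinaryTree.nil
  | BinaryTree.node a l r =>
      if x ≤ a then BinaryTree.node a (Sylv.insert x l) r else BinaryTree.node a l (Sylv.insert x r)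

/-- The binary search tree `P(w)`, inserting the letters of `w` from right to left. -/
def P [LinearOrder α] (w : List α) : Tree α := w.foldr Sylv.insert BinaryTree.nil

/-- Infix (in-order) reading of a labelled binary tree. -/
def inorder : Tree α → List α
  | BinaryTree.nil => []
  | BinaryTree.node a l r => inorder l ++ a :: inorder r

/-- Postfix (post-order) reading of a labelled binary tree. -/
def postorder : Tree α → List α
  | BinaryTree.nil => []
  | BinaryTree.node a l r => postorder l ++ postorder r ++ [a]

/-- Binary search tree property: left labels `≤` root, right labels `>` root. -/
def IsBST [LinearOrder α] : Tree α → Prop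
  | BinaryTree.nil => True
  | BinaryTree.node a l r =>
      (∀ x ∈ inorder l, x ≤ a) ∧ (∀ x ∈ inorder r, a < x) ∧ IsBST l ∧ IsBST r

/-- Shape (underlying unlabelled tree). -/
def shape : Tree α → Tree Unit
  | BinaryTree.nil => BinaryTree.nil
  | BinaryTree.node _ l r => BinaryTree.node () (shape l) (shape r)

/-- The sylvester congruence: the monoid congruence generated by
`z x u y ≡ x z u y` for letters `x ≤ y < z` and a word `u`. -/
inductive SylvCong [LinearOrder α] : List α → List α → Prop
  | rel (p u q : List α) (x y z : α) (hxy : x ≤ y) (hyz : y < z) :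
      SylvCong (p ++ z :: x :: u ++ y :: q) (p ++ x :: z :: u ++ y :: q)
  | refl (w : List α) : SylvCong w w
  | symm {u v} : SylvCong u v → SylvCong v u
  | trans {u v w} : SylvCong u v → SylvCong v w → SylvCong u w

/-- One rewriting step `x z u y → z x u y` (with `x ≤ y < z`), in any context. -/
inductive SylvStep [LinearOrder α] : List α → List α → Prop
  | step (p u q : List α) (x y z : α) (hxy : x ≤ y) (hyz : y < z) :
      SylvStep (p ++ x :: z :: u ++ y :: q) (p ++ z :: x :: u ++ y :: q)

/-- Standardization of a word: values in `1..n`. -/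
def std [LinearOrder α] [Inhabited α] (w : List α) : List ℕ :=
  (List.range w.length).map (fun i =>
    ((List.range w.length).filter (fun j =>
      w.getD j default < w.getD i default ∨
        (w.getD j default = w.getD i default ∧ j < i))).length + 1)

/-- Inverse of a permutation word of `1..n`. -/
def invPerm (s : List ℕ) : List ℕ :=
  (List.range s.length).map (fun j => s.idxOf (j + 1) + 1)

/-- `w` is a permutation word of `{1,…,n}`. -/
def IsPermWord (n : ℕ) (w : List ℕ) : Prop := w.Perm (List.range' 1 n)

/-- Decreasing tree: every node's label exceeds all labels in its subtrees. -/
def IsDecreasing : Tree ℕ → Prop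
  | BinaryTree.nil => True
  | BinaryTree.node a l r =>
      (∀ x ∈ inorder l, x < a) ∧ (∀ x ∈ inorder r, x < a) ∧ IsDecreasing l ∧ IsDecreasing r

/-- `t` is the decreasing tree of the word `w` (unique when letters are distinct). -/
def IsDecrTreeOf (w : List ℕ) (t : Tree ℕ) : Prop := IsDecreasing t ∧ inorder t = w

/-- Label the nodes of an unlabelled tree in infix order, starting from `k`. -/
def labelFrom : Tree Unit → ℕ → Tree ℕ × ℕ
  | BinaryTree.nil, k => (BinaryTree.nil, k)
  | BinaryTree.node _ l r, k =>
      let p := labelFrom l k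
      let q := labelFrom r (p.2 + 1)
      (BinaryTree.node p.2 p.1 q.1, q.2)

/-- The canonical tree-word `w_T`: postfix reading of `T` labelled in infix order by `1..n`. -/
def treeWord (T : Tree Unit) : List ℕ := postorder (labelFrom T 1).1

/-- Shift all letters of a word by `k`. -/
def shift (k : ℕ) (w : List ℕ) : List ℕ := w.map (· + k)

/-- `IsShuffle u v w` : `w` appears in the shuffle product `u ⧢ v`. -/
inductive IsShuffle : List ℕ → List ℕ → List ℕ → Prop
  | nil : IsShuffle [] [] []
  | left (a : ℕ) {u v w} : IsShuffle u v w → IsShuffle (a :: u) v (a :: w)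
  | right (a : ℕ) {u v w} : IsShuffle u v w → IsShuffle u (a :: v) (a :: w)

/-- A model of the homogeneous components of `FQSym`: formal series on words,
encoded by their coefficient functions. -/
abbrev FQS := List ℕ → ℚ

/-- Product of noncommutative series: convolution over factorizations. -/
noncomputable def mulF (f g : FQS) : FQS := fun w =>
  ∑ i ∈ Finset.range (w.length + 1), f (w.take i) * g (w.drop i)

open Classical in
/-- `F_σ = ∑_{std w = σ⁻¹} w`. -/
noncomputable def Fel (σ : List ℕ) : FQS := fun w =>
  if std w = invPerm σ then 1 else 0

open Classical in
/-- `P_T = ∑_{P(σ) = T} F_σ`. -/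
noncomputable def Pel (T : Tree Unit) : FQS := fun w =>
  if ∃ σ, IsPermWord w.length σ ∧ shape (P σ) = T ∧ std w = invPerm σ then 1 else 0

/-- Inversions (by values) of a permutation word. -/
def InvV (w : List ℕ) : Set (ℕ × ℕ) :=
  {p | p.1 < p.2 ∧ p.1 ∈ w ∧ p.2 ∈ w ∧ w.idxOf p.2 < w.idxOf p.1}

/-- Right weak order on permutation words: inclusion of inversion sets. -/
def weakLe (u v : List ℕ) : Prop := InvV u ⊆ InvV v

/-- Product of hook lengths of a binary tree. -/
def hookProd : Tree Unit → ℕ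
  | BinaryTree.nil => 1
  | BinaryTree.node _ l r => (l.numNodes + r.numNodes + 1) * hookProd l * hookProd r

/-- Major index of a word: sum of descent positions (1-based). -/
def maj (w : List ℕ) : ℕ :=
  ∑ i ∈ Finset.range (w.length - 1),
    if w.getD (i + 1) 0 < w.getD i 0 then i + 1 else 0

/-- `[n]_q` as a polynomial. -/
noncomputable def qInt (n : ℕ) : Polynomial ℚ := ∑ i ∈ Finset.range n, Polynomial.X ^ i

/-- `[n]_q!`. -/
noncomputable def qFact : ℕ → Polynomial ℚ
  | 0 => 1
  | n + 1 => qFact n * qInt (n + 1)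

/-- `∏_{v ∈ T} q^{δ_v} [h_v]_q`. -/
noncomputable def qHook : Tree Unit → Polynomial ℚ
  | BinaryTree.nil => 1
  | BinaryTree.node _ l r =>
      Polynomial.X ^ r.numNodes * qInt (l.numNodes + r.numNodes + 1) * qHook l * qHook r

/- ######### auxiliary development ######### -/

theorem inorder_map {β γ : Type*} (h : β → γ) : ∀ t : Tree β, inorder (t.map h) = (inorder t).map h
  | BinaryTree.nil => rfl
  | BinaryTree.node a l r => by
      simp [BinaryTree.map, inorder, inorder_map h l, inorder_map h r]

theorem tree_map_map {β γ δ : Type*} (h : β → γ) (h' : γ → δ) :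
    ∀ t : Tree β, (t.map h).map h' = t.map (fun x => h' (h x))
  | BinaryTree.nil => rfl
  | BinaryTree.node a l r => by
      simp [BinaryTree.map, tree_map_map h h' l, tree_map_map h h' r]

section LO
variable [LinearOrder α]

theorem inorder_insert_perm (x : α) : ∀ t : Tree α, (inorder (Sylv.insert x t)).Perm (x :: inorder t)
  | BinaryTree.nil => by simp [Sylv.insert, inorder]
  | BinaryTree.node a l r => by
      rw [Sylv.insert]
      split
      · simpa [inorder] using ((inorder_insert_perm x l).append_right (a :: inorder r))
      · show (inorder l ++ a :: inorder (Sylv.insert x r)).Perm (x :: (inorder l ++ a :: inorder r))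
        have s1 : (inorder l ++ a :: inorder (Sylv.insert x r)).Perm
            (inorder l ++ a :: x :: inorder r) :=
          (((inorder_insert_perm x r).cons a).append_left _)
        have s2 : (inorder l ++ a :: x :: inorder r).Perm
            (inorder l ++ x :: a :: inorder r) :=
          ((List.Perm.swap x a (inorder r)).append_left _)
        exact (s1.trans s2).trans List.perm_middle

theorem isBST_insert (x : α) : ∀ {t : Tree α}, IsBST t → IsBST (Sylv.insert x t)
  | BinaryTree.nil, _ => by simp [Sylv.insert, IsBST, inorder]
  | BinaryTree.node a l r, ht => by
      obtain ⟨h1, h2, h3, h4⟩ := ht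
      rw [Sylv.insert]
      by_cases hxa : x ≤ a
      · rw [if_pos hxa]
        refine ⟨?_, h2, isBST_insert x h3, h4⟩
        intro y hy
        rcases List.mem_cons.1 ((inorder_insert_perm x l).mem_iff.1 hy) with h | h
        · subst h; exact hxa
        · exact h1 y h
      · rw [if_neg hxa]
        refine ⟨h1, ?_, h3, isBST_insert x h4⟩
        intro y hy
        rcases List.mem_cons.1 ((inorder_insert_perm x r).mem_iff.1 hy) with h | h
        · subst h; exact lt_of_not_ge hxa
        · exact h2 y h

theorem sorted_inorder : ∀ {t : Tree α}, IsBST t → (inorder t).Pairwise (· ≤ ·)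
  | BinaryTree.nil, _ => List.Pairwise.nil
  | BinaryTree.node a l r, ⟨h1, h2, h3, h4⟩ => by
      have sl := sorted_inorder h3
      have sr := sorted_inorder h4
      rw [inorder, List.pairwise_append]
      refine ⟨sl, ?_, ?_⟩
      · rw [List.pairwise_cons]
        exact ⟨fun y hy => (h2 y hy).le, sr⟩
      · intro y hy z hz
        rcases List.mem_cons.1 hz with h | h
        · subst h; exact h1 y hy
        · exact (h1 y hy).trans (h2 z h).le

theorem isBST_P (v : List α) : IsBST (P v) := by
  induction v with
  | nil => trivial
  | cons a v ih => exact isBST_insert a ih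

theorem inorder_P_perm (v : List α) : (inorder (P v)).Perm v := by
  induction v with
  | nil => simp [P, inorder]
  | cons a v ih => exact (inorder_insert_perm a (P v)).trans (ih.cons a)

end LO

/-! ### pairs, heaps -/

section Pairs
variable [LinearOrder α]

def sndL (p : α ×ₗ ℕ) : ℕ := (ofLex p).2

def fstL (p : α ×ₗ ℕ) : α := (ofLex p).1

def pairs : List α → ℕ → List (α ×ₗ ℕ)
  | [], _ => []
  | a :: w, k => toLex (a, k) :: pairs w (k + 1)

def Heap : Tree (α ×ₗ ℕ) → Prop
  | BinaryTree.nil => True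
  | BinaryTree.node a l r =>
      (∀ x ∈ inorder l, sndL x < sndL a) ∧ (∀ x ∈ inorder r, sndL x < sndL a) ∧ Heap l ∧ Heap r

theorem lex_le_iff {x a : α} {i j : ℕ} (hij : i < j) : toLex (x, i) ≤ toLex (a, j) ↔ x ≤ a := by
  rw [Prod.Lex.le_iff]
  constructor
  · rintro (h | ⟨h, -⟩)
    · exact h.le
    · exact h.le
  · intro h
    rcases h.lt_or_eq with h | h
    · exact Or.inl h
    · exact Or.inr ⟨h, hij.le⟩

theorem map_fst_insert (x : α) (i : ℕ) :
    ∀ {t : Tree (α ×ₗ ℕ)}, (∀ p ∈ inorder t, i < sndL p) →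
      (Sylv.insert (toLex (x, i)) t).map fstL = Sylv.insert x (t.map fstL)
  | BinaryTree.nil, _ => rfl
  | BinaryTree.node a l r, h => by
      have ha : i < sndL a := h a (by simp [inorder])
      have hl : ∀ p ∈ inorder l, i < sndL p := fun p hp => h p (by simp [inorder, hp])
      have hr : ∀ p ∈ inorder r, i < sndL p := fun p hp => h p (by simp [inorder, hp])
      rw [Sylv.insert]
      have hle : (toLex (x, i) ≤ a) ↔ (x ≤ fstL a) := by
        have := lex_le_iff (x := x) (a := fstL a) (i := i) (j := sndL a) ha
        simpa [fstL, sndL] using this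
      by_cases hc : x ≤ fstL a
      · rw [if_pos (hle.2 hc)]
        show BinaryTree.node (fstL a) ((Sylv.insert (toLex (x,i)) l).map fstL) (r.map fstL) = _
        rw [map_fst_insert x i hl]
        show _ = Sylv.insert x (BinaryTree.node (fstL a) (l.map fstL) (r.map fstL))
        rw [Sylv.insert, if_pos hc]
      · rw [if_neg (fun hh => hc (hle.1 hh))]
        show BinaryTree.node (fstL a) (l.map fstL) ((Sylv.insert (toLex (x,i)) r).map fstL) = _
        rw [map_fst_insert x i hr]
        show _ = Sylv.insert x (BinaryTree.node (fstL a) (l.map fstL) (r.map fstL))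
        rw [Sylv.insert, if_neg hc]

theorem heap_insert (x : α) (i : ℕ) :
    ∀ {t : Tree (α ×ₗ ℕ)}, Heap t → (∀ p ∈ inorder t, i < sndL p) →
      Heap (Sylv.insert (toLex (x, i)) t)
  | BinaryTree.nil, _, _ => by
      refine ⟨?_, ?_, trivial, trivial⟩ <;> simp [inorder]
  | BinaryTree.node a l r, ⟨h1, h2, h3, h4⟩, h => by
      have ha : i < sndL a := h a (by simp [inorder])
      have hl : ∀ p ∈ inorder l, i < sndL p := fun p hp => h p (by simp [inorder, hp])
      have hr : ∀ p ∈ inorder r, i < sndL p := fun p hp => h p (by simp [inorder, hp])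
      rw [Sylv.insert]
      by_cases hxa : toLex (x, i) ≤ a
      · rw [if_pos hxa]
        refine ⟨?_, h2, heap_insert x i h3 hl, h4⟩
        intro y hy
        rcases List.mem_cons.1 ((inorder_insert_perm _ l).mem_iff.1 hy) with hh | hh
        · subst hh; exact ha
        · exact h1 y hh
      · rw [if_neg hxa]
        refine ⟨h1, ?_, h3, heap_insert x i h4 hr⟩
        intro y hy
        rcases List.mem_cons.1 ((inorder_insert_perm _ r).mem_iff.1 hy) with hh | hh
        · subst hh; exact ha
        · exact h2 y hh

theorem P_pairs (w : List α) : ∀ k : ℕ,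
    (∀ p ∈ inorder (P (pairs w k)), k ≤ sndL p) ∧ Heap (P (pairs w k)) ∧
      (P (pairs w k)).map fstL = P w := by
  induction w with
  | nil => intro k; exact ⟨by simp [pairs, P, inorder], trivial, rfl⟩
  | cons a w ih =>
      intro k
      obtain ⟨ihm, ihh, ihe⟩ := ih (k + 1)
      have hlt : ∀ p ∈ inorder (P (pairs w (k+1))), k < sndL p :=
        fun p hp => Nat.lt_of_lt_of_le (Nat.lt_succ_self k) (ihm p hp)
      have hP : P (pairs (a :: w) k) = Sylv.insert (toLex (a, k)) (P (pairs w (k+1))) := rfl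
      refine ⟨?_, ?_, ?_⟩
      · intro p hp
        rw [hP] at hp
        rcases List.mem_cons.1 ((inorder_insert_perm _ _).mem_iff.1 hp) with hh | hh
        · subst hh; simp [sndL]
        · exact (Nat.le_succ k).trans (ihm p hh)
      · rw [hP]; exact heap_insert a k ihh hlt
      · rw [hP, map_fst_insert a k hlt, ihe]; rfl

theorem split_unique {β : Type*} {a : β} :
    ∀ {l1 : List β} {r1 l2 r2 : List β}, l1 ++ a :: r1 = l2 ++ a :: r2 →
      a ∉ l1 → a ∉ l2 → l1 = l2 ∧ r1 = r2
  | [], r1, [], r2, h, _, _ => ⟨rfl, by simpa using h⟩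
  | [], r1, b :: l2, r2, h, _, h2 => by
      simp only [List.nil_append, List.cons_append, List.cons.injEq] at h
      exact absurd (List.mem_cons.2 (Or.inl h.1)) h2
  | b :: l1, r1, [], r2, h, h1, _ => by
      simp only [List.nil_append, List.cons_append, List.cons.injEq] at h
      exact absurd (List.mem_cons.2 (Or.inl h.1.symm)) h1
  | b :: l1, r1, c :: l2, r2, h, h1, h2 => by
      simp only [List.cons_append, List.cons.injEq] at h
      have := split_unique h.2 (fun hh => h1 (List.mem_cons.2 (Or.inr hh)))
        (fun hh => h2 (List.mem_cons.2 (Or.inr hh)))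
      exact ⟨by rw [h.1, this.1], this.2⟩

theorem heap_unique : ∀ (t1 t2 : Tree (α ×ₗ ℕ)), Heap t1 → Heap t2 →
    inorder t1 = inorder t2 → t1 = t2
  | BinaryTree.nil, BinaryTree.nil, _, _, _ => rfl
  | BinaryTree.nil, BinaryTree.node a2 l2 r2, _, _, h => by
      exfalso; have := congrArg List.length h; simp [inorder] at this
  | BinaryTree.node a1 l1 r1, BinaryTree.nil, _, _, h => by
      exfalso; have := congrArg List.length h; simp [inorder] at this
  | BinaryTree.node a1 l1 r1, BinaryTree.node a2 l2 r2, ⟨h11, h12, h13, h14⟩, ⟨h21, h22, h23, h24⟩, h => by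
      have key : ∀ x, x ∈ inorder l1 ∨ x ∈ inorder r1 → sndL x < sndL a1 := by
        rintro x (hx | hx); exacts [h11 x hx, h12 x hx]
      have key2 : ∀ x, x ∈ inorder l2 ∨ x ∈ inorder r2 → sndL x < sndL a2 := by
        rintro x (hx | hx); exacts [h21 x hx, h22 x hx]
      rw [inorder, inorder] at h
      have ha1 : a1 ∈ inorder l2 ++ a2 :: inorder r2 := by
        rw [← h]; simp
      have ha2 : a2 ∈ inorder l1 ++ a1 :: inorder r1 := by
        rw [h]; simp
      have contra : ¬ (sndL a1 < sndL a2) := by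
        intro hx1
        rcases List.mem_append.1 ha2 with hg | hg
        · exact absurd (key a2 (Or.inl hg)) (Nat.lt_asymm hx1)
        · rcases List.mem_cons.1 hg with hg | hg
          · rw [hg] at hx1; exact Nat.lt_irrefl _ hx1
          · exact absurd (key a2 (Or.inr hg)) (Nat.lt_asymm hx1)
      have haa : a1 = a2 := by
        rcases List.mem_append.1 ha1 with hh | hh
        · exact absurd (key2 a1 (Or.inl hh)) contra
        · rcases List.mem_cons.1 hh with hh | hh
          · exact hh
          · exact absurd (key2 a1 (Or.inr hh)) contra
      subst haa
      have hnl1 : a1 ∉ inorder l1 := fun hh => Nat.lt_irrefl _ (h11 a1 hh)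
      have hnl2 : a1 ∉ inorder l2 := fun hh => Nat.lt_irrefl _ (h21 a1 hh)
      obtain ⟨hl, hr⟩ := split_unique h hnl1 hnl2
      rw [heap_unique l1 l2 h13 h23 hl, heap_unique r1 r2 h14 h24 hr]

end Pairs

/-! ### standardization -/

section Std
variable [LinearOrder α] [Inhabited α]

def key (w : List α) (i : ℕ) : α ×ₗ ℕ := toLex (w.getD i default, i)

def gfun (w : List α) (m : ℕ) : α ×ₗ ℕ := toLex (w.getD (m - 1) default, m)

def rankP (w : List α) (i : ℕ) : ℕ :=
  ((List.range w.length).filter (fun j =>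
      w.getD j default < w.getD i default ∨
        (w.getD j default = w.getD i default ∧ j < i))).length

theorem std_eq (w : List α) :
    std w = (List.range w.length).map (fun i => rankP w i + 1) := rfl

theorem pred_iff (w : List α) (i j : ℕ) :
    (decide (w.getD j default < w.getD i default ∨
        (w.getD j default = w.getD i default ∧ j < i)) = true) ↔ key w j < key w i := by
  rw [decide_eq_true_iff, key, key, Prod.Lex.lt_iff]
  exact Iff.rfl

theorem key_inj (w : List α) {i j : ℕ} (h : key w i = key w j) : i = j := by
  have := congrArg (fun p => (ofLex p).2) h
  simpa [key] using this

theorem rankP_lt_rankP (w : List α) {i i' : ℕ} (hi : i < w.length)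
    (h : key w i < key w i') : rankP w i < rankP w i' := by
  have hsub : ((List.range w.length).filter (fun j =>
      w.getD j default < w.getD i default ∨
        (w.getD j default = w.getD i default ∧ j < i))).Sublist
      ((List.range w.length).filter (fun j =>
      w.getD j default < w.getD i' default ∨
        (w.getD j default = w.getD i' default ∧ j < i'))) := by
    apply List.monotone_filter_right
    intro j hj
    rw [pred_iff] at hj ⊢
    exact hj.trans h
  refine Nat.lt_of_le_of_ne hsub.length_le ?_
  intro hlen
  have heq := hsub.eq_of_length hlen
  have hmem : i ∈ (List.range w.length).filter (fun j =>
      w.getD j default < w.getD i' default ∨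
        (w.getD j default = w.getD i' default ∧ j < i')) := by
    rw [List.mem_filter]
    exact ⟨List.mem_range.2 hi, (pred_iff w i' i).2 h⟩
  rw [← heq, List.mem_filter] at hmem
  exact lt_irrefl _ ((pred_iff w i i).1 hmem.2)

theorem rankP_lt_len (w : List α) {i : ℕ} (hi : i < w.length) : rankP w i < w.length := by
  have hsub : ((List.range w.length).filter (fun j =>
      w.getD j default < w.getD i default ∨
        (w.getD j default = w.getD i default ∧ j < i))).Sublist (List.range w.length) :=
    List.filter_sublist
  have hle := hsub.length_le
  rw [List.length_range] at hle
  refine Nat.lt_of_le_of_ne (le_of_eq_of_le (by rfl) hle) ?_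
  intro hlen
  have heq := hsub.eq_of_length (by rw [List.length_range]; exact hlen)
  have hmem : i ∈ List.range w.length := List.mem_range.2 hi
  rw [← heq, List.mem_filter] at hmem
  exact lt_irrefl _ ((pred_iff w i i).1 hmem.2)

theorem rankP_surj (w : List α) {j : ℕ} (hj : j < w.length) :
    ∃ i, i < w.length ∧ rankP w i = j := by
  have hinj : Set.InjOn (rankP w) (Finset.range w.length) := by
    intro i hi i' hi' hr
    simp only [Finset.coe_range, Set.mem_Iio] at hi hi'
    by_contra hne
    have hk : key w i ≠ key w i' := fun hh => hne (key_inj w hh)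
    rcases lt_or_gt_of_ne hk with hh | hh
    · exact absurd hr (Nat.ne_of_lt (rankP_lt_rankP w hi hh))
    · exact absurd hr.symm (Nat.ne_of_lt (rankP_lt_rankP w hi' hh))
  have hsubset : (Finset.range w.length).image (rankP w) ⊆ Finset.range w.length := by
    intro m hm
    rw [Finset.mem_image] at hm
    obtain ⟨i, hi, rfl⟩ := hm
    exact Finset.mem_range.2 (rankP_lt_len w (Finset.mem_range.1 hi))
  have hcard : (Finset.range w.length).card ≤
      ((Finset.range w.length).image (rankP w)).card := by
    rw [Finset.card_image_of_injOn hinj]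
  have heq := Finset.eq_of_subset_of_card_le hsubset hcard
  have : j ∈ (Finset.range w.length).image (rankP w) := by
    rw [heq]; exact Finset.mem_range.2 hj
  rw [Finset.mem_image] at this
  obtain ⟨i, hi, hri⟩ := this
  exact ⟨i, Finset.mem_range.1 hi, hri⟩

def idxP (w : List α) (j : ℕ) : ℕ := (std w).idxOf (j + 1)

theorem length_std (w : List α) : (std w).length = w.length := by
  rw [std_eq, List.length_map, List.length_range]

theorem idxP_spec (w : List α) {j : ℕ} (hj : j < w.length) :
    idxP w j < w.length ∧ rankP w (idxP w j) = j := by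
  obtain ⟨i, hi, hri⟩ := rankP_surj w hj
  have hmem : j + 1 ∈ std w := by
    rw [std_eq, List.mem_map]
    exact ⟨i, List.mem_range.2 hi, by rw [hri]⟩
  have hlt : (std w).idxOf (j + 1) < (std w).length := List.idxOf_lt_length_iff.2 hmem
  have hget := List.idxOf_get hlt
  have hlt' : idxP w j < w.length := by
    rw [idxP, ← length_std w]; exact hlt
  refine ⟨hlt', ?_⟩
  have h2 : rankP w (idxP w j) + 1 = j + 1 := by
    have hlt2 : idxP w j < (List.map (fun i => rankP w i + 1) (List.range w.length)).length := hlt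
    calc rankP w (idxP w j) + 1
        = (List.map (fun i => rankP w i + 1) (List.range w.length))[idxP w j]'hlt2 := by
          simp
      _ = (std w).get ⟨List.idxOf (j + 1) (std w), hlt⟩ := by
          rw [List.get_eq_getElem]; rfl
      _ = j + 1 := hget
  exact Nat.succ_injective h2

theorem invPerm_std (w : List α) :
    invPerm (std w) = (List.range w.length).map (fun j => idxP w j + 1) := by
  rw [invPerm, length_std]
  rfl

theorem key_order (w : List α) {j j' : ℕ} (hjj : j < j') (hj' : j' < w.length) :
    key w (idxP w j) < key w (idxP w j') := by
  have hj : j < w.length := hjj.trans hj'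
  obtain ⟨ha1, ha2⟩ := idxP_spec w hj
  obtain ⟨hb1, hb2⟩ := idxP_spec w hj'
  have hne : key w (idxP w j) ≠ key w (idxP w j') := by
    intro hh
    have := key_inj w hh
    rw [← ha2, ← hb2, this] at hjj
    exact lt_irrefl _ hjj
  rcases lt_or_gt_of_ne hne with hh | hh
  · exact hh
  · exfalso
    have := rankP_lt_rankP w hb1 hh
    rw [ha2, hb2] at this
    exact absurd hjj (Nat.lt_asymm this)

theorem gfun_succ (w : List α) (j : ℕ) : gfun w (j + 1) = toLex (w.getD j default, j + 1) := by
  simp [gfun]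

theorem gfun_lt (w : List α) {i i' : ℕ} (h : key w i < key w i') :
    gfun w (i + 1) < gfun w (i' + 1) := by
  rw [key, key, Prod.Lex.lt_iff] at h
  rw [gfun, gfun, Prod.Lex.lt_iff]
  simp only [Nat.add_sub_cancel, ofLex_toLex] at h ⊢
  rcases h with h | ⟨h1, h2⟩
  · exact Or.inl h
  · exact Or.inr ⟨h1, by omega⟩

theorem sorted_invPerm_map (w : List α) :
    (((invPerm (std w)).map (gfun w)).Pairwise (· ≤ ·)) := by
  rw [invPerm_std, List.map_map]
  rw [List.pairwise_map]
  refine (List.pairwise_lt_range (n := w.length)).imp_of_mem ?_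
  intro a b ha hb hab
  exact (gfun_lt w (key_order w hab (List.mem_range.1 hb))).le

theorem pairs_eq (w : List α) : ∀ k : ℕ,
    pairs w k = (List.range w.length).map (fun j => toLex (w.getD j default, j + k)) := by
  induction w with
  | nil => intro k; rfl
  | cons a w ih =>
      intro k
      rw [List.length_cons, List.range_succ_eq_map, List.map_cons, List.map_map, pairs,
        ih (k + 1)]
      simp only [List.getD_cons_zero, Nat.zero_add]
      congr 1
      apply List.map_congr_left
      intro j hj
      simp only [Function.comp_apply, List.getD_cons_succ]
      have : j + (k + 1) = j + 1 + k := by omega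
      rw [this]

theorem perm_invPerm_map (w : List α) :
    ((invPerm (std w)).map (gfun w)).Perm (pairs w 1) := by
  rw [invPerm_std, List.map_map, pairs_eq w 1]
  have h1 : (List.range w.length).map (fun j => toLex (w.getD j default, j + 1))
      = (List.range w.length).map (fun j => gfun w (j + 1)) := by
    apply List.map_congr_left
    intro j _
    rw [gfun_succ]
  rw [h1]
  have h2 : ((List.range w.length).map (fun j => (gfun w ∘ (· + 1)) (idxP w j)))
      = ((List.range w.length).map (idxP w)).map (gfun w ∘ (· + 1)) := by
    rw [List.map_map]; rfl
  have hperm : ((List.range w.length).map (idxP w)).Perm (List.range w.length) := by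
    have hnodup : ((List.range w.length).map (idxP w)).Nodup := by
      refine List.nodup_range.map_on ?_
      intro x hx y hy hxy
      have hx' := (idxP_spec w (List.mem_range.1 hx)).2
      have hy' := (idxP_spec w (List.mem_range.1 hy)).2
      rw [← hx', ← hy', hxy]
    have hsub : ((List.range w.length).map (idxP w)) ⊆ List.range w.length := by
      intro m hm
      rw [List.mem_map] at hm
      obtain ⟨j, hj, rfl⟩ := hm
      exact List.mem_range.2 (idxP_spec w (List.mem_range.1 hj)).1
    refine (List.subperm_of_subset hnodup hsub).perm_of_length_le ?_
    rw [List.length_map]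
  have := hperm.map (gfun w ∘ (· + 1))
  rw [← h2] at this
  exact this

theorem heap_map_of_decreasing (g : ℕ → α ×ₗ ℕ) (hg : ∀ m, sndL (g m) = m) :
    ∀ {t : Tree ℕ}, IsDecreasing t → Heap (t.map g)
  | BinaryTree.nil, _ => trivial
  | BinaryTree.node a l r, ⟨h1, h2, h3, h4⟩ => by
      refine ⟨?_, ?_, heap_map_of_decreasing g hg h3, heap_map_of_decreasing g hg h4⟩
      · intro x hx
        rw [inorder_map, List.mem_map] at hx
        obtain ⟨y, hy, rfl⟩ := hx
        rw [hg, hg]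
        exact h1 y hy
      · intro x hx
        rw [inorder_map, List.mem_map] at hx
        obtain ⟨y, hy, rfl⟩ := hx
        rw [hg, hg]
        exact h2 y hy

end Std

end Sylv

/-- `P(w)` is obtained from `Q(w) = T(std(w)⁻¹)` by replacing each
label `i` by the `i`-th letter of `w`. -/
theorem stmt16 {α : Type*} [LinearOrder α] [Inhabited α] (w : List α) (t : Tree ℕ)
    (ht : Sylv.IsDecrTreeOf (Sylv.invPerm (Sylv.std w)) t) :
    Sylv.P w = t.map (fun i => w.getD (i - 1) default) := by
  obtain ⟨hdec, hin⟩ := ht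
  have hheap : Sylv.Heap (t.map (Sylv.gfun w)) :=
    Sylv.heap_map_of_decreasing (Sylv.gfun w) (fun m => rfl) hdec
  obtain ⟨hmem, hheap2, hmapfst⟩ := Sylv.P_pairs w 1
  have hio : Sylv.inorder (t.map (Sylv.gfun w)) = Sylv.inorder (Sylv.P (Sylv.pairs w 1)) := by
    rw [Sylv.inorder_map, hin]
    have hperm : (Sylv.inorder (Sylv.P (Sylv.pairs w 1))).Perm
        ((Sylv.invPerm (Sylv.std w)).map (Sylv.gfun w)) :=
      (Sylv.inorder_P_perm _).trans (Sylv.perm_invPerm_map w).symm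
    exact (hperm.eq_of_pairwise' (Sylv.sorted_inorder (Sylv.isBST_P _))
      (Sylv.sorted_invPerm_map w)).symm
  have heq : t.map (Sylv.gfun w) = Sylv.P (Sylv.pairs w 1) :=
    Sylv.heap_unique _ _ hheap hheap2 hio
  rw [← hmapfst, ← heq, Sylv.tree_map_map]
  rfl
end

section
/- F-basis product rule in FQSym: for permutations α ∈ S_k and β ∈ S_l, F_α · F_β = Σ_γ F_γ, where γ runs over the shuffle product α ⧢ β[k] of the word α with the word β shifted by k; in particular the structure constants are 0 or 1 and FQSym is closed under multiplication. -/
namespace Stmt19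
open Sylv List

/-- "index i is strictly before index j" in the standardization order. -/
def K (w : List ℕ) (i j : ℕ) : Prop :=
  w.getD i default < w.getD j default ∨ (w.getD i default = w.getD j default ∧ i < j)

def Pb (w : List ℕ) (i : ℕ) : ℕ → Bool := fun j =>
  decide (w.getD j default < w.getD i default ∨
        (w.getD j default = w.getD i default ∧ j < i))

def r (w : List ℕ) (i : ℕ) : ℕ := ((List.range w.length).filter (Pb w i)).length

lemma std_eq (w : List ℕ) : std w = (List.range w.length).map (fun i => r w i + 1) := rfl

lemma Pb_iff {w : List ℕ} {i j : ℕ} : Pb w i j = true ↔ K w j i := by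
  simp [Pb, K]

lemma K_trans {w : List ℕ} {i j m : ℕ} (h₁ : K w i j) (h₂ : K w j m) : K w i m := by
  unfold K at *; omega

lemma K_trichot {w : List ℕ} {i j : ℕ} (h : i ≠ j) : K w i j ∨ K w j i := by
  unfold K; omega

lemma K_irrefl {w : List ℕ} {i : ℕ} : ¬ K w i i := by unfold K; omega

lemma r_lt_r {w : List ℕ} {i j : ℕ} (hi : i < w.length) (hj : j < w.length)
    (h : K w i j) : r w i < r w j := by
  have hsub : ((List.range w.length).filter (Pb w i)) <+
      ((List.range w.length).filter (Pb w j)) := by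
    apply List.monotone_filter_right
    intro m hm
    exact Pb_iff.mpr (K_trans (Pb_iff.mp hm) h)
  refine lt_of_le_of_ne hsub.length_le ?_
  intro he
  have heq := hsub.eq_of_length he
  have : i ∈ (List.range w.length).filter (Pb w i) := by
    rw [heq, List.mem_filter]
    exact ⟨List.mem_range.mpr hi, Pb_iff.mpr h⟩
  rw [List.mem_filter] at this
  exact K_irrefl (Pb_iff.mp this.2)

lemma r_lt_len {w : List ℕ} {i : ℕ} (hi : i < w.length) : r w i < w.length := by
  have hsub : ((List.range w.length).filter (Pb w i)) <+ List.range w.length :=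
    List.filter_sublist
  have := hsub.length_le
  rw [List.length_range] at this
  refine lt_of_le_of_ne this ?_
  intro he
  have heq := hsub.eq_of_length (by rw [List.length_range]; exact he)
  have : i ∈ (List.range w.length).filter (Pb w i) := by
    rw [heq]; exact List.mem_range.mpr hi
  rw [List.mem_filter] at this
  exact K_irrefl (Pb_iff.mp this.2)

lemma r_lt_iff {w : List ℕ} {i j : ℕ} (hi : i < w.length) (hj : j < w.length) :
    K w i j ↔ r w i < r w j := by
  constructor
  · exact r_lt_r hi hj
  · intro h
    rcases eq_or_ne i j with rfl | hne
    · omega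
    · rcases K_trichot (w := w) hne with hk | hk
      · exact hk
      · exact absurd (r_lt_r hj hi hk) (by omega)

lemma r_inj {w : List ℕ} {i j : ℕ} (hi : i < w.length) (hj : j < w.length)
    (h : r w i = r w j) : i = j := by
  by_contra hne
  rcases K_trichot (w := w) hne with hk | hk
  · exact absurd (r_lt_r hi hj hk) (by omega)
  · exact absurd (r_lt_r hj hi hk) (by omega)

lemma r_map_perm (w : List ℕ) :
    ((List.range w.length).map (r w)).Perm (List.range w.length) := by
  apply List.Subperm.perm_of_length_le
  · apply List.subperm_of_subset
    · exact List.nodup_range.map_on (fun x hx y hy h =>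
        r_inj (List.mem_range.mp hx) (List.mem_range.mp hy) h)
    · intro x hx
      rcases List.mem_map.mp hx with ⟨i, hi, rfl⟩
      exact List.mem_range.mpr (r_lt_len (List.mem_range.mp hi))
  · simp

lemma std_perm (w : List ℕ) : IsPermWord w.length (std w) := by
  have h1 : std w = ((List.range w.length).map (r w)).map (· + 1) := by
    rw [std_eq, List.map_map]; rfl
  have h2 : (List.range w.length).map (· + 1) = List.range' 1 w.length := by
    rw [List.range'_eq_map_range]
    exact List.map_congr_left (fun x _ => by omega)
  rw [IsPermWord, h1, ← h2]
  exact (r_map_perm w).map _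

lemma std_length (w : List ℕ) : (std w).length = w.length := by simp [std_eq]

lemma std_getElem (w : List ℕ) {i : ℕ} (hi : i < (std w).length) :
    (std w)[i] = r w i + 1 := by
  simp [std_eq]

lemma permWord_length {n : ℕ} {s : List ℕ} (h : IsPermWord n s) : s.length = n := by
  simpa using h.length_eq

lemma permWord_nodup {n : ℕ} {s : List ℕ} (h : IsPermWord n s) : s.Nodup :=
  h.nodup_iff.mpr List.nodup_range'

lemma permWord_mem {n : ℕ} {s : List ℕ} (h : IsPermWord n s) {x : ℕ} :
    x ∈ s ↔ 1 ≤ x ∧ x < n + 1 := by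
  rw [h.mem_iff, List.mem_range'_1]; omega

lemma invPerm_length (s : List ℕ) : (invPerm s).length = s.length := by simp [invPerm]

lemma invPerm_getElem (s : List ℕ) {j : ℕ} (hj : j < (invPerm s).length) :
    (invPerm s)[j] = s.idxOf (j + 1) + 1 := by
  simp [invPerm]

lemma invPerm_perm {n : ℕ} {s : List ℕ} (h : IsPermWord n s) :
    IsPermWord n (invPerm s) := by
  have hlen := permWord_length h
  apply List.Subperm.perm_of_length_le
  · apply List.subperm_of_subset
    · apply List.nodup_range.map_on
      intro x hx y hy hxy
      have hxs : x + 1 ∈ s := (permWord_mem h).mpr (by simp at hx; omega)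
      have hys : y + 1 ∈ s := (permWord_mem h).mpr (by simp at hy; omega)
      have := (List.idxOf_inj (y := y + 1) hxs).mp (by omega)
      omega
    · intro x hx
      rcases List.mem_map.mp hx with ⟨j, hj, rfl⟩
      have hjs : j + 1 ∈ s := (permWord_mem h).mpr (by simp at hj; omega)
      have := List.idxOf_lt_length_iff.mpr hjs
      rw [List.mem_range'_1]; omega
  · simp [invPerm, hlen]

lemma invPerm_invPerm {n : ℕ} {s : List ℕ} (h : IsPermWord n s) :
    invPerm (invPerm s) = s := by
  have hlen := permWord_length h
  have hinv : IsPermWord n (invPerm s) := invPerm_perm h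
  apply List.ext_getElem (by simp [invPerm_length, hlen])
  intro j h₁ h₂
  have hj : j < n := by rwa [hlen] at h₂
  have hs1 : 1 ≤ s[j] ∧ s[j] < n + 1 := (permWord_mem h).mp (List.getElem_mem h₂)
  set i₀ : ℕ := s[j] - 1 with hi₀
  have hi₀lt : i₀ < (invPerm s).length := by rw [invPerm_length, hlen]; omega
  have hval : (invPerm s)[i₀] = j + 1 := by
    rw [invPerm_getElem s hi₀lt]
    have : i₀ + 1 = s[j] := by omega
    rw [this]
    have : s.idxOf s[j] = j := List.Nodup.idxOf_getElem (permWord_nodup h) j h₂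
    omega
  rw [invPerm_getElem _ h₁]
  have : (invPerm s).idxOf (j + 1) = i₀ := by
    conv_lhs => rw [← hval]
    exact List.Nodup.idxOf_getElem (permWord_nodup hinv) i₀ hi₀lt
  rw [this]; omega

/-- `Key` on 1-based positions. -/
def Key (w : List ℕ) (p q : ℕ) : Prop :=
  w.getD (p - 1) default < w.getD (q - 1) default ∨
    (w.getD (p - 1) default = w.getD (q - 1) default ∧ p < q)

lemma Key_succ {w : List ℕ} {i j : ℕ} : Key w (i + 1) (j + 1) ↔ K w i j := by
  simp [Key, K]

def StSort (u c : List ℕ) : Prop :=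
  c.Perm (List.range' 1 u.length) ∧ c.Pairwise (Key u)

lemma stSort_unique {u c₁ c₂ : List ℕ} (h₁ : StSort u c₁) (h₂ : StSort u c₂) :
    c₁ = c₂ := by
  haveI : Std.Antisymm (Key u) := ⟨by
    intro p q hpq hqp
    unfold Key at hpq hqp; omega⟩
  exact List.Perm.eq_of_pairwise' h₁.2 h₂.2 (h₁.1.trans h₂.1.symm)

lemma stSort_q (u : List ℕ) : StSort u (invPerm (std u)) := by
  have hstd := std_perm u
  constructor
  · exact invPerm_perm hstd
  · rw [invPerm, std_length]
    rw [List.pairwise_map]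
    apply (List.pairwise_lt_range (n := u.length)).imp_of_mem
    intro j₁ j₂ hj₁ hj₂ hlt
    rw [List.mem_range] at hj₁ hj₂
    have hm₁ : j₁ + 1 ∈ std u := (permWord_mem hstd).mpr (by omega)
    have hm₂ : j₂ + 1 ∈ std u := (permWord_mem hstd).mpr (by omega)
    set i₁ := (std u).idxOf (j₁ + 1) with hi₁
    set i₂ := (std u).idxOf (j₂ + 1) with hi₂
    have hi₁lt : i₁ < (std u).length := List.idxOf_lt_length_iff.mpr hm₁
    have hi₂lt : i₂ < (std u).length := List.idxOf_lt_length_iff.mpr hm₂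
    have hv₁ : r u i₁ + 1 = j₁ + 1 := by
      have h' := List.getElem_idxOf (xs := std u) (x := j₁ + 1) hi₁lt
      rwa [std_getElem u hi₁lt] at h'
    have hv₂ : r u i₂ + 1 = j₂ + 1 := by
      have h' := List.getElem_idxOf (xs := std u) (x := j₂ + 1) hi₂lt
      rwa [std_getElem u hi₂lt] at h'
    rw [std_length] at hi₁lt hi₂lt
    rw [Key_succ]
    exact (r_lt_iff hi₁lt hi₂lt).mpr (by omega)

end Stmt19

namespace Stmt19
open Sylv List

lemma getD_take {w : List ℕ} {k i : ℕ} (hik : i < k) (hk : k ≤ w.length) :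
    (w.take k).getD i default = w.getD i default := by
  have h1 : i < (w.take k).length := by simp; omega
  have h2 : i < w.length := by omega
  rw [List.getD_eq_getElem _ _ h1, List.getD_eq_getElem _ _ h2, List.getElem_take]

lemma getD_drop {w : List ℕ} {k i : ℕ} (h : k + i < w.length) :
    (w.drop k).getD i default = w.getD (k + i) default := by
  have h1 : i < (w.drop k).length := by simp; omega
  rw [List.getD_eq_getElem _ _ h1, List.getD_eq_getElem _ _ h, List.getElem_drop]

lemma shuffle_perm {u v c : List ℕ} (h : IsShuffle u v c) : c.Perm (u ++ v) := by
  induction h with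
  | nil => simp
  | left a h ih => exact ih.cons a
  | right a h ih => exact (ih.cons a).trans List.perm_middle.symm

lemma shuffle_filter {u v c : List ℕ} (p : ℕ → Bool)
    (hu : ∀ x ∈ u, p x = true) (hv : ∀ x ∈ v, p x = false)
    (h : IsShuffle u v c) :
    c.filter p = u ∧ c.filter (fun x => !p x) = v := by
  induction h with
  | nil => simp
  | left a h ih =>
      have hpa : p a = true := hu a (by simp)
      have := ih (fun x hx => hu x (by simp [hx])) hv
      simp [List.filter_cons, hpa, this.1, this.2]
  | right a h ih =>
      have hpa : p a = false := hv a (by simp)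
      have := ih hu (fun x hx => hv x (by simp [hx]))
      simp [List.filter_cons, hpa, this.1, this.2]

lemma shuffle_of_filter (p : ℕ → Bool) :
    ∀ (c u v : List ℕ), c.filter p = u → c.filter (fun x => !p x) = v →
      IsShuffle u v c := by
  intro c
  induction c with
  | nil => intro u v hu hv; simp at hu hv; subst hu; subst hv; exact IsShuffle.nil
  | cons x c ih =>
      intro u v hu hv
      by_cases hx : p x = true
      · rw [List.filter_cons_of_pos hx] at hu
        rw [List.filter_cons_of_neg (by simp [hx])] at hv
        subst hu; subst hv
        exact IsShuffle.left x (ih _ _ rfl rfl)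
      · rw [List.filter_cons_of_neg (by simpa using hx)] at hu
        rw [List.filter_cons_of_pos (by simp at hx; simp [hx])] at hv
        subst hu; subst hv
        exact IsShuffle.right x (ih _ _ rfl rfl)

lemma shift_perm {l k : ℕ} {b : List ℕ} (hb : IsPermWord l b) :
    (shift k b).Perm (List.range' (k + 1) l) := by
  have h1 : (shift k b).Perm ((List.range' 1 l).map (· + k)) := hb.map _
  refine h1.trans (List.Perm.of_eq ?_)
  rw [List.range'_eq_map_range, List.range'_eq_map_range, List.map_map]
  exact List.map_congr_left (fun x _ => by simp; omega)

/-- members of the ≤ k filter of a sorted position list give StSort for the take. -/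
lemma L1 {w : List ℕ} {k l : ℕ} (hn : w.length = k + l) :
    StSort (w.take k) ((invPerm (std w)).filter (fun x => decide (x ≤ k))) := by
  have hq := stSort_q w
  have hperm : IsPermWord w.length (invPerm (std w)) := invPerm_perm (std_perm w)
  have hkn : k ≤ w.length := by omega
  have hlen : (w.take k).length = k := by simp; omega
  constructor
  · rw [hlen]
    have h1 := hperm.filter (fun x => decide (x ≤ k))
    have h2 : (List.range' 1 w.length).filter (fun x => decide (x ≤ k)) =
        List.range' 1 k := by
      rw [hn, ← List.range'_append_1 (s := 1) (m := k) (n := l), List.filter_append]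
      have e1 : (List.range' 1 k).filter (fun x => decide (x ≤ k)) = List.range' 1 k :=
        List.filter_eq_self.mpr (fun a ha => by
          rw [List.mem_range'_1] at ha; simp; omega)
      have e2 : (List.range' (1 + k) l).filter (fun x => decide (x ≤ k)) = [] :=
        List.filter_eq_nil_iff.mpr (fun a ha => by
          rw [List.mem_range'_1] at ha; simp; omega)
      rw [e1, e2, List.append_nil]
    rwa [h2] at h1
  · have hpw := hq.2.sublist
      (List.filter_sublist (p := fun x => decide (x ≤ k)) (l := invPerm (std w)))
    apply hpw.imp_of_mem
    intro p q hp hq' hKey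
    have hp' := List.mem_filter.mp hp
    have hq'' := List.mem_filter.mp hq'
    have hpk : p ≤ k := by simpa using hp'.2
    have hqk : q ≤ k := by simpa using hq''.2
    have hp1 : 1 ≤ p := ((permWord_mem hperm).mp hp'.1).1
    have hq1 : 1 ≤ q := ((permWord_mem hperm).mp hq''.1).1
    unfold Key at *
    rw [getD_take (by omega) hkn, getD_take (by omega) hkn]
    exact hKey

lemma L2 {w : List ℕ} {k l : ℕ} (hn : w.length = k + l) :
    StSort (w.drop k)
      (((invPerm (std w)).filter (fun x => !decide (x ≤ k))).map (· - k)) := by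
  have hq := stSort_q w
  have hperm : IsPermWord w.length (invPerm (std w)) := invPerm_perm (std_perm w)
  have hlen : (w.drop k).length = l := by simp; omega
  constructor
  · rw [hlen]
    have h1 := hperm.filter (fun x => !decide (x ≤ k))
    have h2 : (List.range' 1 w.length).filter (fun x => !decide (x ≤ k)) =
        List.range' (k + 1) l := by
      rw [hn, ← List.range'_append_1 (s := 1) (m := k) (n := l), List.filter_append]
      have e1 : (List.range' 1 k).filter (fun x => !decide (x ≤ k)) = [] :=
        List.filter_eq_nil_iff.mpr (fun a ha => by
          rw [List.mem_range'_1] at ha; simp; omega)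
      have e2 : (List.range' (1 + k) l).filter (fun x => !decide (x ≤ k)) =
          List.range' (1 + k) l :=
        List.filter_eq_self.mpr (fun a ha => by
          rw [List.mem_range'_1] at ha; simp; omega)
      rw [e1, e2, List.nil_append]
      congr 1; omega
    rw [h2] at h1
    refine (h1.map (· - k)).trans (List.Perm.of_eq ?_)
    rw [List.range'_eq_map_range, List.range'_eq_map_range, List.map_map]
    exact List.map_congr_left (fun x _ => by simp; omega)
  · rw [List.pairwise_map]
    have hpw := hq.2.sublist
      (List.filter_sublist (p := fun x => !decide (x ≤ k)) (l := invPerm (std w)))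
    apply hpw.imp_of_mem
    intro p q hp hq' hKey
    have hp' := List.mem_filter.mp hp
    have hq'' := List.mem_filter.mp hq'
    have hpk : k < p := by simpa using hp'.2
    have hqk : k < q := by simpa using hq''.2
    have hpn : p < w.length + 1 := ((permWord_mem hperm).mp hp'.1).2
    have hqn : q < w.length + 1 := ((permWord_mem hperm).mp hq''.1).2
    unfold Key at *
    have e1 : (w.drop k).getD (p - k - 1) default = w.getD (p - 1) default := by
      rw [getD_drop (by omega)]
      congr 1; omega
    have e2 : (w.drop k).getD (q - k - 1) default = w.getD (q - 1) default := by
      rw [getD_drop (by omega)]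
      congr 1; omega
    rw [e1, e2]
    omega

end Stmt19

namespace Stmt19
open Sylv List

lemma main_iff {k l : ℕ} {a b : List ℕ} (ha : IsPermWord k a) (hb : IsPermWord l b)
    (w : List ℕ) :
    IsShuffle a (shift k b) (invPerm (std w)) ↔
      (w.length = k + l ∧ std (w.take k) = invPerm a ∧ std (w.drop k) = invPerm b) := by
  have hperm : IsPermWord w.length (invPerm (std w)) := invPerm_perm (std_perm w)
  have hc₀len : (invPerm (std w)).length = w.length := by
    rw [invPerm_length, std_length]
  constructor
  · intro hS
    have hcp := shuffle_perm hS
    have hn : w.length = k + l := by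
      have := hcp.length_eq
      simp [hc₀len, permWord_length ha, shift, permWord_length hb] at this
      omega
    have hfil := shuffle_filter (fun x => decide (x ≤ k))
      (fun x hx => by
        have := ((permWord_mem ha).mp hx).2; simp; omega)
      (fun x hx => by
        simp only [shift, List.mem_map] at hx
        obtain ⟨y, hy, rfl⟩ := hx
        have := ((permWord_mem hb).mp hy).1
        simp; omega) hS
    have hA : a = invPerm (std (w.take k)) := by
      refine stSort_unique ?_ (stSort_q _)
      rw [← hfil.1]; exact L1 hn
    have hB : b = invPerm (std (w.drop k)) := by
      have hmap : ((invPerm (std w)).filter (fun x => !decide (x ≤ k))).map (· - k)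
          = b := by
        rw [hfil.2]
        simp only [shift, List.map_map]
        have : ((· - k) ∘ (· + k) : ℕ → ℕ) = id := by
          funext x; simp
        rw [this, List.map_id]
      rw [← hmap]
      exact stSort_unique (L2 hn) (stSort_q _)
    refine ⟨hn, ?_, ?_⟩
    · rw [hA, invPerm_invPerm (std_perm _)]
    · rw [hB, invPerm_invPerm (std_perm _)]
  · rintro ⟨hn, hA, hB⟩
    have hA' : a = invPerm (std (w.take k)) := by
      rw [hA, invPerm_invPerm ha]
    have hB' : b = invPerm (std (w.drop k)) := by
      rw [hB, invPerm_invPerm hb]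
    have hfa : (invPerm (std w)).filter (fun x => decide (x ≤ k)) = a := by
      rw [hA']
      exact stSort_unique (L1 hn) (stSort_q _)
    have hfb : (invPerm (std w)).filter (fun x => !decide (x ≤ k)) = shift k b := by
      have hmap : ((invPerm (std w)).filter (fun x => !decide (x ≤ k))).map (· - k)
          = b := by
        rw [hB']; exact stSort_unique (L2 hn) (stSort_q _)
      have hid : ((invPerm (std w)).filter (fun x => !decide (x ≤ k))).map
          ((fun x => x + k) ∘ fun x => x - k) =
          (invPerm (std w)).filter (fun x => !decide (x ≤ k)) := by
        refine (List.map_congr_left ?_).trans (List.map_id _)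
        intro x hx
        have h2 := List.mem_filter.mp hx
        have hxk : k < x := by simpa using h2.2
        simp only [Function.comp_apply, id_eq]
        omega
      rw [shift, ← hmap, List.map_map]
      exact hid.symm
    exact shuffle_of_filter _ _ _ _ hfa hfb

end Stmt19


open Sylv Stmt19 List

/-- product rule in the `F`-basis of `FQSym`:
`F_α · F_β = ∑_{γ ∈ α ⧢ β[k]} F_γ`. -/
theorem stmt19 (k l : ℕ) (a b : List ℕ)
    (ha : Sylv.IsPermWord k a) (hb : Sylv.IsPermWord l b) :
    Sylv.mulF (Sylv.Fel a) (Sylv.Fel b) =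
      ∑ᶠ c ∈ {c : List ℕ | Sylv.IsShuffle a (Sylv.shift k b) c}, Sylv.Fel c := by
  classical
  have hSsub : {c : List ℕ | IsShuffle a (shift k b) c} ⊆
      {c | c ∈ (List.range' 1 (k + l)).permutations} := by
    intro c hc
    have h1 : c.Perm (a ++ shift k b) := shuffle_perm hc
    have h2 : (a ++ shift k b).Perm (List.range' 1 k ++ List.range' (k + 1) l) :=
      ha.append (shift_perm hb)
    have h3 : List.range' 1 k ++ List.range' (k + 1) l = List.range' 1 (k + l) := by
      have e : (1 + k) = (k + 1) := by omega
      rw [← List.range'_append_1 (s := 1) (m := k) (n := l), e]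
    exact List.mem_permutations.mpr (h1.trans (h2.trans (List.Perm.of_eq h3)))
  have hSfin : {c : List ℕ | IsShuffle a (shift k b) c}.Finite :=
    Set.Finite.subset (List.finite_toSet _) hSsub
  rw [finsum_mem_eq_finite_toFinset_sum _ hSfin]
  funext w
  rw [Finset.sum_apply]
  set c₀ := invPerm (std w) with hc₀def
  have hc₀ : std w = invPerm c₀ := (invPerm_invPerm (std_perm w)).symm
  have huniq : ∀ x ∈ hSfin.toFinset, Fel x w ≠ 0 → x = c₀ := by
    intro x hx hne
    have hxS : IsShuffle a (shift k b) x := (Set.Finite.mem_toFinset _).mp hx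
    have hxperm : IsPermWord (k + l) x := by
      have h1 : x.Perm (a ++ shift k b) := shuffle_perm hxS
      have h2 : (a ++ shift k b).Perm (List.range' 1 k ++ List.range' (k + 1) l) :=
        ha.append (shift_perm hb)
      have h3 : List.range' 1 k ++ List.range' (k + 1) l = List.range' 1 (k + l) := by
        have e : (1 + k) = (k + 1) := by omega
        rw [← List.range'_append_1 (s := 1) (m := k) (n := l), e]
      exact h1.trans (h2.trans (List.Perm.of_eq h3))
    have hstdx : std w = invPerm x := by
      by_contra h
      simp [Fel, h] at hne
    rw [hc₀def, hstdx]
    exact (invPerm_invPerm hxperm).symm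
  have hmulF : mulF (Fel a) (Fel b) w =
      ∑ i ∈ Finset.range (w.length + 1), Fel a (w.take i) * Fel b (w.drop i) := rfl
  by_cases hC : w.length = k + l ∧ std (w.take k) = invPerm a ∧
      std (w.drop k) = invPerm b
  · -- both sides equal 1
    obtain ⟨hn, hA, hB⟩ := hC
    have hmem : c₀ ∈ hSfin.toFinset := by
      rw [Set.Finite.mem_toFinset]
      exact (main_iff ha hb w).mpr ⟨hn, hA, hB⟩
    have hRHS : (∑ x ∈ hSfin.toFinset, Fel x w) = 1 := by
      rw [Finset.sum_eq_single_of_mem c₀ hmem (fun x hx hne => by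
        by_contra h; exact hne (huniq x hx h))]
      simp [Fel, hc₀]
    rw [hRHS, hmulF]
    rw [Finset.sum_eq_single_of_mem k (Finset.mem_range.mpr (by omega))
      (fun i hi hne => ?_)]
    · simp [Fel, hA, hB]
    · have h1 : Fel a (w.take i) = 0 := by
        have hi' : i ≤ w.length := by
          have := Finset.mem_range.mp hi; omega
        rw [Fel]
        rw [if_neg]
        intro he
        have := congrArg List.length he
        rw [std_length, invPerm_length, permWord_length ha, List.length_take] at this
        omega
      rw [h1, zero_mul]
  · -- both sides equal 0
    have hnotmem : c₀ ∉ hSfin.toFinset := by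
      rw [Set.Finite.mem_toFinset]
      intro h
      exact hC ((main_iff ha hb w).mp h)
    have hRHS : (∑ x ∈ hSfin.toFinset, Fel x w) = 0 := by
      apply Finset.sum_eq_zero
      intro x hx
      by_contra h
      exact hnotmem ((huniq x hx h) ▸ hx)
    rw [hRHS, hmulF]
    apply Finset.sum_eq_zero
    intro i hi
    by_contra hne0
    have h1 : std (w.take i) = invPerm a := by
      by_contra h; simp [Fel, h] at hne0
    have h2 : std (w.drop i) = invPerm b := by
      by_contra h; simp [Fel, h] at hne0
    have hl1 := congrArg List.length h1
    have hl2 := congrArg List.length h2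
    rw [std_length, invPerm_length, permWord_length ha, List.length_take] at hl1
    rw [std_length, invPerm_length, permWord_length hb, List.length_drop] at hl2
    have hi' : i ≤ w.length := by
      have := Finset.mem_range.mp hi; omega
    have hik : i = k := by omega
    subst hik
    exact hC ⟨by omega, h1, h2⟩
end
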